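/- Let ρ and σ be faithful density matrices on ℂⁿ, let {ψ_1,…,ψ_n} be a basis of unit vectors of ℂⁿ, and let (ρ_i), (σ_i) be probability vectors with all ρ_i > 0 and σ_i > 0 such that ρ = Σ_i ρ_i |ψ_i⟩⟨ψ_i| and σ = Σ_i σ_i |ψ_i⟩⟨ψ_i|. Then Tr[ρ log(√ρ σ⁻¹ √ρ)] = Σ_{i=1}^n ρ_i log(ρ_i/σ_i); that is, the Belavkin–Staszewski relative entropy D_BS(ρ‖σ) equals the Kullback–Leibler divergence of the discrete measures Σ_i ρ_i δ_{ψ_i} and Σ_i σ_i δ_{ψ_i} supported on the common basis. -/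

import Mathlib

open MeasureTheory Matrix
open scoped ENNReal ComplexOrder Classical

noncomputable section

instance (n : ℕ) : MeasurableSpace (EuclideanSpace ℂ (Fin n)) := borel _
instance (n : ℕ) : BorelSpace (EuclideanSpace ℂ (Fin n)) := ⟨rfl⟩

/-- `ℂⁿ` as a Euclidean (Hilbert) space. -/
abbrev Hn (n : ℕ) := EuclideanSpace ℂ (Fin n)

/-- The unit sphere of `ℂⁿ`, identified with the set of pure states. -/
abbrev Sph (n : ℕ) := Metric.sphere (0 : Hn n) 1

/-- The rank-one matrix `|ψ⟩⟨ψ| = ψ ψ†`. -/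
def outer {n : ℕ} (ψ : Fin n → ℂ) : Matrix (Fin n) (Fin n) ℂ :=
  Matrix.of fun i j => ψ i * (starRingEnd ℂ) (ψ j)

/-- The rank-one matrix `|x⟩⟨y| = x y†`. -/
def outer2 {n : ℕ} (x y : Fin n → ℂ) : Matrix (Fin n) (Fin n) ℂ :=
  Matrix.of fun i j => x i * (starRingEnd ℂ) (y j)

/-- The standard inner product on `ℂⁿ`, antilinear in the first argument. -/
def ip {n : ℕ} (x y : Fin n → ℂ) : ℂ := ∑ i, (starRingEnd ℂ) (x i) * y i

/-- The norm on `ℂⁿ` induced by `ip`. -/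
def nrm {n : ℕ} (x : Fin n → ℂ) : ℝ := Real.sqrt (ip x x).re

/-- `Λ(μ) = ∫ |ψ⟩⟨ψ| dμ(ψ)`, defined entrywise. -/
def Lambda {n : ℕ} (μ : Measure (Sph n)) : Matrix (Fin n) (Fin n) ℂ :=
  Matrix.of fun i j => ∫ ψ, ((ψ : Hn n) i * (starRingEnd ℂ) ((ψ : Hn n) j)) ∂μ

/-- Kullback–Leibler divergence `∫ log(dμ/dν) dμ` if `μ ≪ ν` (with value `⊤` if the
integral does not exist), and `⊤` otherwise. -/
def KLdiv {X : Type*} [MeasurableSpace X] (μ ν : Measure X) : EReal :=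
  if μ ≪ ν ∧ Integrable (llr μ ν) μ then ((∫ x, llr μ ν x ∂μ : ℝ) : EReal) else ⊤

/-- The positive square root of a positive semidefinite matrix (junk value `0` otherwise). -/
def msqrt {n : ℕ} (A : Matrix (Fin n) (Fin n) ℂ) : Matrix (Fin n) (Fin n) ℂ :=
  if h : A.PosSemidef then
    h.1.eigenvectorUnitary.1 * diagonal ((↑) ∘ (Real.sqrt ·) ∘ h.1.eigenvalues) *
      (star h.1.eigenvectorUnitary : Matrix (Fin n) (Fin n) ℂ)
  else 0

/-- `f` applied to a Hermitian matrix via the continuous functional calculus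
(junk value `0` on non-Hermitian matrices). -/
def mcfc {n : ℕ} (f : ℝ → ℝ) (A : Matrix (Fin n) (Fin n) ℂ) : Matrix (Fin n) (Fin n) ℂ :=
  if h : A.IsHermitian then h.cfc f else 0

/-- The matrix logarithm, via the continuous functional calculus. -/
def mlog {n : ℕ} (A : Matrix (Fin n) (Fin n) ℂ) : Matrix (Fin n) (Fin n) ℂ :=
  mcfc Real.log A

/-- The Belavkin–Staszewski relative entropy `Tr[ρ log(√ρ σ⁻¹ √ρ)]`. -/
def DBS {n : ℕ} (ρ σ : Matrix (Fin n) (Fin n) ℂ) : ℝ :=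
  ((ρ * mlog (msqrt ρ * σ⁻¹ * msqrt ρ)).trace).re

/-- The trace distance `½ Tr[√((A−B)†(A−B))]`. -/
def traceDist {n : ℕ} (A B : Matrix (Fin n) (Fin n) ℂ) : ℝ :=
  (1 / 2) * ((msqrt ((A - B)ᴴ * (A - B))).trace).re

/-- The Fubini–Study distance `arccos |⟨ψ, φ⟩|` between unit vectors. -/
def dFS {n : ℕ} (ψ φ : Hn n) : ℝ := Real.arccos ‖(inner ℂ ψ φ : ℂ)‖

/-- The (closed) support of a measure. -/
def msupport {X : Type*} [TopologicalSpace X] [MeasurableSpace X] (μ : Measure X) : Set X :=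
  {x | ∀ U : Set X, IsOpen U → x ∈ U → μ U ≠ 0}

section Aux
open Polynomial
variable {n : ℕ}

/-- Conjugation by an invertible matrix as an ℝ-algebra hom. -/
def conjAlgHom (B C : Matrix (Fin n) (Fin n) ℂ) (h1 : B * C = 1) (h2 : C * B = 1) :
    Matrix (Fin n) (Fin n) ℂ →ₐ[ℝ] Matrix (Fin n) (Fin n) ℂ where
  toFun M := B * M * C
  map_one' := by simp only [mul_one, h1]
  map_mul' M N := by
    show B * (M * N) * C = (B * M * C) * (B * N * C)
    calc B * (M * N) * C = (B * M) * (C * B) * (N * C) := by rw [h2]; noncomm_ring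
    _ = (B * M * C) * (B * N * C) := by noncomm_ring
  map_zero' := by show B * 0 * C = 0; simp
  map_add' M N := by show B * (M + N) * C = B * M * C + B * N * C; noncomm_ring
  commutes' r := by
    show B * (algebraMap ℝ (Matrix (Fin n) (Fin n) ℂ)) r * C = _
    rw [Algebra.algebraMap_eq_smul_one, Matrix.mul_smul, Matrix.smul_mul, mul_one, h1]

lemma aeval_conj (B C M : Matrix (Fin n) (Fin n) ℂ) (h1 : B * C = 1) (h2 : C * B = 1)
    (P : ℝ[X]) : aeval (B * M * C) P = B * aeval M P * C := by
  have := Polynomial.aeval_algHom_apply (conjAlgHom B C h1 h2) M P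
  simp only [conjAlgHom, AlgHom.coe_mk, RingHom.coe_mk, MonoidHom.coe_mk, OneHom.coe_mk] at this
  exact this

lemma aeval_diagonal (v : Fin n → ℂ) (P : ℝ[X]) :
    aeval (Matrix.diagonal v) P = Matrix.diagonal (fun i => aeval (v i) P) := by
  have h := Polynomial.aeval_algHom_apply
    (Matrix.diagonalAlgHom (R := ℝ) (n := Fin n) (α := ℂ)) v P
  simp only [Matrix.diagonalAlgHom, AlgHom.coe_mk, diagonalRingHom, RingHom.coe_mk,
    MonoidHom.coe_mk, OneHom.coe_mk] at h
  have h2 : (aeval v P : Fin n → ℂ) = fun i => aeval (v i) P :=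
    funext fun i => (Polynomial.aeval_algHom_apply (Pi.evalAlgHom ℝ (fun _ : Fin n => ℂ) i) v P).symm
  rw [h2] at h
  exact h

lemma aevalOfRealC (x : ℝ) (P : ℝ[X]) :
    aeval ((x : ℂ)) P = ((P.eval x : ℝ) : ℂ) := by
  rw [← Complex.coe_algebraMap, Polynomial.aeval_algebraMap_apply]
  norm_num [Polynomial.aeval_def, Polynomial.eval₂_eq_eval_map]

lemma cfc_conj_diag {H : Matrix (Fin n) (Fin n) ℂ} (hH : H.IsHermitian)
    (B C : Matrix (Fin n) (Fin n) ℂ) (h1 : B * C = 1) (h2 : C * B = 1) (d : Fin n → ℝ)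
    (hHeq : H = B * Matrix.diagonal (fun i => (d i : ℂ)) * C) (f : ℝ → ℝ) :
    hH.cfc f = B * Matrix.diagonal (fun i => ((f (d i) : ℝ) : ℂ)) * C := by
  set P : ℝ[X] := Lagrange.interpolate (Finset.univ.image d) id f with hP
  have hPeval : ∀ x ∈ Finset.univ.image d, P.eval x = f x := by
    intro x hx
    obtain ⟨i, -, rfl⟩ := Finset.mem_image.mp hx
    have := Lagrange.eval_interpolate_at_node (v := (id : ℝ → ℝ)) (r := f)
      (Set.injOn_id _) hx
    simpa [hP] using this
  -- eigenvalues of H lie in the range of d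
  have hspec : ∀ i, ∃ j, hH.eigenvalues i = d j := by
    intro i
    have h1' : hH.eigenvalues i ∈ spectrum ℝ H := hH.eigenvalues_mem_spectrum_real i
    have h2' : ((hH.eigenvalues i : ℝ) : ℂ) ∈ spectrum ℂ H :=
      spectrum.algebraMap_mem ℂ h1'
    set u : (Matrix (Fin n) (Fin n) ℂ)ˣ := ⟨B, C, h1, h2⟩ with hu
    have : spectrum ℂ H = spectrum ℂ (Matrix.diagonal (fun i => (d i : ℂ))) := by
      rw [hHeq]
      exact spectrum.units_conjugate (u := u)
    rw [this, _root_.spectrum_diagonal] at h2'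
    obtain ⟨j, hj⟩ := h2'
    refine ⟨j, ?_⟩
    have : ((d j : ℝ) : ℂ) = ((hH.eigenvalues i : ℝ) : ℂ) := hj
    exact_mod_cast this.symm
  -- cfc f = cfc P.eval
  have hcongr : hH.cfc f = hH.cfc P.eval := by
    unfold Matrix.IsHermitian.cfc
    have : (RCLike.ofReal ∘ f ∘ hH.eigenvalues : Fin n → ℂ)
        = RCLike.ofReal ∘ P.eval ∘ hH.eigenvalues := by
      funext i
      obtain ⟨j, hj⟩ := hspec i
      show ((f (hH.eigenvalues i) : ℝ) : ℂ) = ((P.eval (hH.eigenvalues i) : ℝ) : ℂ)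
      rw [hj, hPeval (d j) (Finset.mem_image_of_mem d (Finset.mem_univ j))]
    rw [this]
  -- cfc P.eval = aeval H P
  have hU1 : (hH.eigenvectorUnitary : Matrix (Fin n) (Fin n) ℂ) * star (hH.eigenvectorUnitary : Matrix (Fin n) (Fin n) ℂ) = 1 :=
    Unitary.coe_mul_star_self _
  have hU2 : star (hH.eigenvectorUnitary : Matrix (Fin n) (Fin n) ℂ) * (hH.eigenvectorUnitary : Matrix (Fin n) (Fin n) ℂ) = 1 :=
    Unitary.coe_star_mul_self _
  have haev : hH.cfc P.eval = Polynomial.aeval H P := by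
    conv_rhs => rw [hH.spectral_theorem, Unitary.conjStarAlgAut_apply]
    rw [aeval_conj _ _ _ hU1 hU2, aeval_diagonal]
    unfold Matrix.IsHermitian.cfc
    have : (fun i => Polynomial.aeval ((hH.eigenvalues i : ℂ)) P)
        = (RCLike.ofReal ∘ P.eval ∘ hH.eigenvalues : Fin n → ℂ) := by
      funext i
      exact aevalOfRealC _ _
    simp only [Function.comp_def] at this ⊢
    rw [← this]
    rfl
  have hfin : (fun i => Polynomial.aeval ((d i : ℂ)) P) = fun i => ((f (d i) : ℝ) : ℂ) := by
    funext i
    rw [aevalOfRealC, hPeval (d i) (Finset.mem_image_of_mem d (Finset.mem_univ i))]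
  rw [hcongr, haev, hHeq, aeval_conj _ _ _ h1 h2, aeval_diagonal, hfin]

lemma msqrt_facts {ρ : Matrix (Fin n) (Fin n) ℂ} (h : ρ.PosSemidef) :
    msqrt ρ * msqrt ρ = ρ ∧ (msqrt ρ).IsHermitian := by
  rw [msqrt, dif_pos h]
  have hUU : star (h.1.eigenvectorUnitary : Matrix (Fin n) (Fin n) ℂ) *
      (h.1.eigenvectorUnitary : Matrix (Fin n) (Fin n) ℂ) = 1 := Unitary.coe_star_mul_self _
  constructor
  · conv_rhs => rw [h.1.spectral_theorem, Unitary.conjStarAlgAut_apply]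
    simp only [Matrix.mul_assoc]
    rw [← Matrix.mul_assoc (star _) _, hUU, Matrix.one_mul, ← Matrix.mul_assoc (diagonal _),
      diagonal_mul_diagonal]
    congr 3
    funext i
    simp only [Function.comp_apply]
    rw [← Complex.ofReal_mul, Real.mul_self_sqrt (h.eigenvalues_nonneg i)]
    rfl
  · simp [Matrix.IsHermitian, Matrix.conjTranspose_mul, Matrix.mul_assoc,
      Matrix.diagonal_conjTranspose, Matrix.star_eq_conjTranspose]
    congr 3
    funext i
    simp

end Aux

/-- If `ρ, σ` are faithful states written in a common basis `{ψ_i}` of unit vectors with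
positive weights `p, q`, then `Tr[ρ log(√ρ σ⁻¹ √ρ)] = Σ_i p_i log (p_i / q_i)`. -/
theorem stmt1 {n : ℕ} (ρ σ : Matrix (Fin n) (Fin n) ℂ)
    (hρ : ρ.PosDef) (hσ : σ.PosDef) (hρ1 : ρ.trace = 1) (hσ1 : σ.trace = 1)
    (ψ : Fin n → Hn n) (hψ : ∀ i, ‖ψ i‖ = 1) (hli : LinearIndependent ℂ ψ)
    (p q : Fin n → ℝ) (hp : ∀ i, 0 < p i) (hq : ∀ i, 0 < q i)
    (hps : ∑ i, p i = 1) (hqs : ∑ i, q i = 1)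
    (hρeq : ρ = ∑ i, (p i : ℂ) • outer (ψ i))
    (hσeq : σ = ∑ i, (q i : ℂ) • outer (ψ i)) :
    (ρ * mlog (msqrt ρ * σ⁻¹ * msqrt ρ)).trace
      = ((∑ i, p i * Real.log (p i / q i) : ℝ) : ℂ) := by
  classical
  -- the matrix with columns ψ j
  set A : Matrix (Fin n) (Fin n) ℂ := Matrix.of (fun i j => ψ j i) with hA
  set Dp : Matrix (Fin n) (Fin n) ℂ := Matrix.diagonal (fun i => (p i : ℂ)) with hDp
  set Dq : Matrix (Fin n) (Fin n) ℂ := Matrix.diagonal (fun i => (q i : ℂ)) with hDq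
  have hfact : ∀ (r : Fin n → ℝ),
      (∑ i, (r i : ℂ) • outer (ψ i)) = A * Matrix.diagonal (fun i => (r i : ℂ)) * Aᴴ := by
    intro r
    ext i j
    rw [Matrix.mul_apply]
    simp only [Matrix.sum_apply, Matrix.smul_apply, outer, Matrix.of_apply, smul_eq_mul,
      Matrix.mul_diagonal, Matrix.conjTranspose_apply, hA, RCLike.star_def]
    exact Finset.sum_congr rfl fun k _ => by ring
  have hρA : ρ = A * Dp * Aᴴ := by rw [hρeq]; exact hfact p
  have hσA : σ = A * Dq * Aᴴ := by rw [hσeq]; exact hfact q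
  -- invertibility of A
  have hρdet : IsUnit ρ.det := (Matrix.isUnit_iff_isUnit_det ρ).mp hρ.isUnit
  have hAdet : IsUnit A.det := by
    have h := hρdet
    rw [hρA] at h
    simp only [Matrix.det_mul] at h
    exact isUnit_of_mul_isUnit_left (isUnit_of_mul_isUnit_left h)
  have hAHdet : IsUnit Aᴴ.det := by
    rw [Matrix.det_conjTranspose]
    exact hAdet.star
  -- the square root of ρ
  have hρps : ρ.PosSemidef := hρ.posSemidef
  set S : Matrix (Fin n) (Fin n) ℂ := hρps.1.eigenvectorUnitary.1 *
    diagonal ((↑) ∘ (Real.sqrt ·) ∘ hρps.1.eigenvalues) *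
      (star hρps.1.eigenvectorUnitary : Matrix (Fin n) (Fin n) ℂ) with hS
  have hmsqrt : msqrt ρ = S := by rw [msqrt, dif_pos hρps]
  have hSS : S * S = ρ := by rw [← hmsqrt]; exact (msqrt_facts hρps).1
  have hSdet : IsUnit S.det := by
    have h : S.det * S.det = ρ.det := by rw [← Matrix.det_mul, hSS]
    have h2 := hρdet
    rw [← h] at h2
    exact isUnit_of_mul_isUnit_left h2
  have hSH : S.IsHermitian := by rw [← hmsqrt]; exact (msqrt_facts hρps).2
  -- inverse of σ
  have hq0 : ∀ i, (q i : ℂ) ≠ 0 := fun i => Complex.ofReal_ne_zero.mpr (hq i).ne'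
  have hDqDq : Dq * Matrix.diagonal (fun i => (q i : ℂ)⁻¹) = 1 := by
    rw [hDq, Matrix.diagonal_mul_diagonal]
    have : (fun i => (q i : ℂ) * (q i : ℂ)⁻¹) = fun _ => (1 : ℂ) := by
      funext i; exact mul_inv_cancel₀ (hq0 i)
    rw [this, Matrix.diagonal_one]
  have hσinv : σ⁻¹ = (Aᴴ)⁻¹ * Matrix.diagonal (fun i => (q i : ℂ)⁻¹) * A⁻¹ := by
    apply Matrix.inv_eq_right_inv
    rw [hσA]
    calc A * Dq * Aᴴ * ((Aᴴ)⁻¹ * Matrix.diagonal (fun i => (q i : ℂ)⁻¹) * A⁻¹)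
        = A * Dq * (Aᴴ * (Aᴴ)⁻¹) * (Matrix.diagonal (fun i => (q i : ℂ)⁻¹) * A⁻¹) := by
          simp only [Matrix.mul_assoc]
      _ = A * (Dq * Matrix.diagonal (fun i => (q i : ℂ)⁻¹)) * A⁻¹ := by
          rw [Matrix.mul_nonsing_inv _ hAHdet, mul_one]; simp only [Matrix.mul_assoc]
      _ = 1 := by rw [hDqDq, mul_one, Matrix.mul_nonsing_inv _ hAdet]
  -- H = B * D * C
  set B : Matrix (Fin n) (Fin n) ℂ := S * (Aᴴ)⁻¹ with hB
  set C : Matrix (Fin n) (Fin n) ℂ := Aᴴ * S⁻¹ with hC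
  have hBC : B * C = 1 := by
    rw [hB, hC]
    calc S * (Aᴴ)⁻¹ * (Aᴴ * S⁻¹) = S * ((Aᴴ)⁻¹ * Aᴴ) * S⁻¹ := by simp only [Matrix.mul_assoc]
      _ = 1 := by rw [Matrix.nonsing_inv_mul _ hAHdet, mul_one, Matrix.mul_nonsing_inv _ hSdet]
  have hCB : C * B = 1 := by
    rw [hB, hC]
    calc Aᴴ * S⁻¹ * (S * (Aᴴ)⁻¹) = Aᴴ * (S⁻¹ * S) * (Aᴴ)⁻¹ := by simp only [Matrix.mul_assoc]
      _ = 1 := by rw [Matrix.nonsing_inv_mul _ hSdet, mul_one, Matrix.mul_nonsing_inv _ hAHdet]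
  have hHH : (S * σ⁻¹ * S).IsHermitian := by
    have hσinvH : (σ⁻¹).IsHermitian := hσ.1.inv
    unfold Matrix.IsHermitian
    rw [Matrix.conjTranspose_mul (S * σ⁻¹) S, Matrix.conjTranspose_mul S σ⁻¹, hσinvH.eq, hSH.eq, Matrix.mul_assoc S σ⁻¹ S]
  have hkey : Matrix.diagonal (fun i => (q i : ℂ)⁻¹) * (A⁻¹ * (S * S))
      = Matrix.diagonal (fun i => ((p i / q i : ℝ) : ℂ)) * Aᴴ := by
    rw [hSS, hρA, Matrix.mul_assoc A Dp Aᴴ, Matrix.nonsing_inv_mul_cancel_left _ _ hAdet,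
      ← Matrix.mul_assoc, hDp, Matrix.diagonal_mul_diagonal]
    have h5 : (fun i => (q i : ℂ)⁻¹ * (p i : ℂ)) = fun i => ((p i / q i : ℝ) : ℂ) := by
      funext i; push_cast; ring
    rw [h5]
  have hHBDC : S * σ⁻¹ * S = B * Matrix.diagonal (fun i => ((p i / q i : ℝ) : ℂ)) * C := by
    have hcancel : ∀ X Y : Matrix (Fin n) (Fin n) ℂ, X * S = Y * S → X = Y := by
      intro X Y hXY
      have h := congrArg (fun M => M * S⁻¹) hXY
      simpa [Matrix.mul_nonsing_inv_cancel_right _ _ hSdet] using h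
    apply hcancel
    rw [hσinv, hB, hC]
    calc S * ((Aᴴ)⁻¹ * Matrix.diagonal (fun i => (q i : ℂ)⁻¹) * A⁻¹) * S * S
        = S * (Aᴴ)⁻¹ * (Matrix.diagonal (fun i => (q i : ℂ)⁻¹) * (A⁻¹ * (S * S))) := by
          simp only [Matrix.mul_assoc]
      _ = S * (Aᴴ)⁻¹ * (Matrix.diagonal (fun i => ((p i / q i : ℝ) : ℂ)) * Aᴴ) := by rw [hkey]
      _ = S * (Aᴴ)⁻¹ * Matrix.diagonal (fun i => ((p i / q i : ℝ) : ℂ)) * (Aᴴ * (S⁻¹ * S)) := by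
          rw [Matrix.nonsing_inv_mul _ hSdet, mul_one]; simp only [Matrix.mul_assoc]
      _ = S * (Aᴴ)⁻¹ * Matrix.diagonal (fun i => ((p i / q i : ℝ) : ℂ)) * (Aᴴ * S⁻¹) * S := by
          simp only [Matrix.mul_assoc]
  -- the logarithm
  set L : Matrix (Fin n) (Fin n) ℂ :=
    Matrix.diagonal (fun i => ((Real.log (p i / q i) : ℝ) : ℂ)) with hL
  have hmlog : mlog (msqrt ρ * σ⁻¹ * msqrt ρ) = B * L * C := by
    rw [hmsqrt, mlog, mcfc, dif_pos hHH]
    exact cfc_conj_diag hHH B C hBC hCB (fun i => p i / q i) hHBDC Real.log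
  -- trace computation
  have htr1 : (ρ * (B * L * C)).trace = (C * (ρ * (B * L))).trace := by
    have h : ρ * (B * L * C) = (ρ * (B * L)) * C := by simp only [Matrix.mul_assoc]
    rw [h, Matrix.trace_mul_comm]
  have hmat : C * (ρ * (B * L)) = Aᴴ * A * Dp * L := by
    rw [hC, hB]
    calc Aᴴ * S⁻¹ * (ρ * (S * (Aᴴ)⁻¹ * L))
        = Aᴴ * (S⁻¹ * (S * (S * S))) * ((Aᴴ)⁻¹ * L) := by
          rw [← hSS]; simp only [Matrix.mul_assoc]
      _ = Aᴴ * ρ * ((Aᴴ)⁻¹ * L) := by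
          rw [Matrix.nonsing_inv_mul_cancel_left _ _ hSdet, hSS]
      _ = Aᴴ * (A * Dp) * (Aᴴ * (Aᴴ)⁻¹) * L := by rw [hρA]; simp only [Matrix.mul_assoc]
      _ = Aᴴ * A * Dp * L := by
          rw [Matrix.mul_nonsing_inv _ hAHdet, mul_one]; simp only [Matrix.mul_assoc]
  have hGdiag : ∀ i, (Aᴴ * A) i i = 1 := by
    intro i
    have hnorm := hψ i
    rw [EuclideanSpace.norm_eq] at hnorm
    have h2 : ∑ k, ‖ψ i k‖ ^ 2 = 1 := Real.sqrt_eq_one.mp hnorm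
    simp only [Matrix.mul_apply, Matrix.conjTranspose_apply, hA, Matrix.of_apply,
      RCLike.star_def]
    have h4 : ∀ k, (starRingEnd ℂ) (ψ i k) * ψ i k = ((‖ψ i k‖ ^ 2 : ℝ) : ℂ) := by
      intro k
      rw [mul_comm, Complex.mul_conj, Complex.normSq_eq_norm_sq]
    simp_rw [h4]
    rw [← Complex.ofReal_sum, h2, Complex.ofReal_one]
  have htr2 : (Aᴴ * A * Dp * L).trace = ∑ i, ((p i * Real.log (p i / q i) : ℝ) : ℂ) := by
    have hDL : Dp * L = Matrix.diagonal (fun i => ((p i * Real.log (p i / q i) : ℝ) : ℂ)) := by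
      rw [hDp, hL, Matrix.diagonal_mul_diagonal]
      congr 1
      funext i
      push_cast
      ring
    have h : Aᴴ * A * Dp * L = (Aᴴ * A) * (Dp * L) := by simp only [Matrix.mul_assoc]
    rw [h, hDL, Matrix.trace]
    apply Finset.sum_congr rfl
    intro i _
    rw [Matrix.diag_apply, Matrix.mul_diagonal, hGdiag i, one_mul]
  rw [hmlog, htr1, hmat, htr2, ← Complex.ofReal_sum]

end
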